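/- arXiv:1012.4155 — 5 statements merged into one kernel-verified Lean document; each statement's English description precedes it below -/
import Mathlib

section
/- Let L be a nondegenerate even integral lattice and h ∈ L a primitive vector with h² = 2d ≠ 0. If L_h denotes the orthogonal complement of h in L and div(h) is the positive generator of the ideal (h, L) ⊆ ℤ, then |det L_h| = |2d · det L| / div(h)². -/
open Matrix

/-- For a nondegenerate even lattice `L` (given by its Gram matrix `B` on `ℤ^n`)
and a primitive vector `h` with `h² = 2d ≠ 0`, the orthogonal complement `L_h`
(given by a ℤ-basis `b` with Gram matrix `G`) satisfies `|det L_h| = |2d · det L| / div(h)²`. -/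
theorem stmt_0 (n : ℕ) (B : Matrix (Fin n) (Fin n) ℤ)
    (hsymm : B.IsSymm) (hnd : B.det ≠ 0)
    (heven : ∀ v : Fin n → ℤ, Even (v ⬝ᵥ B.mulVec v))
    (h : Fin n → ℤ) (d : ℤ) (hd : d ≠ 0)
    (hlen : h ⬝ᵥ B.mulVec h = 2 * d)
    (hprim : ∀ (k : ℤ) (v : Fin n → ℤ), h = k • v → IsUnit k)
    (divh : ℤ) (hdivpos : 0 < divh)
    (hdiv : ∀ m : ℤ, (∃ v : Fin n → ℤ, h ⬝ᵥ B.mulVec v = m) ↔ divh ∣ m)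
    (m : ℕ) (hm : m + 1 = n)
    (b : Fin m → (Fin n → ℤ))
    (hborth : ∀ i, h ⬝ᵥ B.mulVec (b i) = 0)
    (hbind : LinearIndependent ℤ b)
    (hbspan : ∀ v : Fin n → ℤ, h ⬝ᵥ B.mulVec v = 0 →
      v ∈ Submodule.span ℤ (Set.range b)) :
    |(Matrix.of fun i j => b i ⬝ᵥ B.mulVec (b j)).det| * divh ^ 2 = |2 * d * B.det| := by
  subst hm
  -- divh divides 2d
  obtain ⟨e, he⟩ : divh ∣ 2 * d := (hdiv (2 * d)).mp ⟨h, hlen⟩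
  -- a vector of pairing divh
  obtain ⟨w, hw⟩ : ∃ v, h ⬝ᵥ B.mulVec v = divh := (hdiv divh).mpr dvd_rfl
  -- the matrix C with rows w, b
  set C : Matrix (Fin (m+1)) (Fin (m+1)) ℤ := Matrix.of (Fin.cons w b) with hC
  -- C is unimodular
  have hCsurj : Function.Surjective C.vecMul := by
    intro v
    obtain ⟨k, hk⟩ : divh ∣ h ⬝ᵥ B.mulVec v := (hdiv _).mp ⟨v, rfl⟩
    have hker : h ⬝ᵥ B.mulVec (v - k • w) = 0 := by
      rw [Matrix.mulVec_sub, dotProduct_sub, Matrix.mulVec_smul,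
        dotProduct_smul, hw, hk, smul_eq_mul]
      ring
    obtain ⟨c, hc⟩ := (Submodule.mem_span_range_iff_exists_fun ℤ).mp (hbspan _ hker)
    refine ⟨Fin.cons k c, ?_⟩
    ext j
    simp only [Matrix.vecMul, dotProduct, hC, Fin.sum_univ_succ, Fin.cons_zero,
      Fin.cons_succ, Matrix.of_apply]
    have := congrFun hc j
    simp only [Finset.sum_apply, Pi.smul_apply, smul_eq_mul, Pi.sub_apply] at this
    linarith [this]
  have hCunit : IsUnit C.det := (Matrix.isUnit_iff_isUnit_det C).mp
    (Matrix.vecMul_surjective_iff_isUnit.mp hCsurj)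
  have hCsq : C.det * C.det = 1 := by
    rcases Int.isUnit_iff.mp hCunit with h' | h' <;> rw [h'] <;> ring
  -- coefficients of h - e•w in terms of b
  have hker : h ⬝ᵥ B.mulVec (h - e • w) = 0 := by
    rw [Matrix.mulVec_sub, dotProduct_sub, Matrix.mulVec_smul,
      dotProduct_smul, hw, hlen, smul_eq_mul, he]
    ring
  obtain ⟨c, hc⟩ := (Submodule.mem_span_range_iff_exists_fun ℤ).mp (hbspan _ hker)
  -- the matrix A with rows h, b
  set A : Matrix (Fin (m+1)) (Fin (m+1)) ℤ := Matrix.of (Fin.cons h b) with hA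
  -- the transition matrix E
  set E : Matrix (Fin (m+1)) (Fin (m+1)) ℤ :=
    Matrix.of (Fin.cons (Fin.cons e c)
      (fun i => Fin.cons 0 (fun j => (1 : Matrix (Fin m) (Fin m) ℤ) i j))) with hE
  have hAEC : A = E * C := by
    ext i j
    refine Fin.cases ?_ (fun i => ?_) i
    · simp only [hA, hE, hC, Matrix.mul_apply, Fin.sum_univ_succ, Matrix.of_apply,
        Fin.cons_zero, Fin.cons_succ]
      have := congrFun hc j
      simp only [Finset.sum_apply, Pi.smul_apply, smul_eq_mul, Pi.sub_apply] at this
      linarith [this]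
    · simp only [hA, hE, hC, Matrix.mul_apply, Fin.sum_univ_succ, Matrix.of_apply,
        Fin.cons_zero, Fin.cons_succ, zero_mul, zero_add, Matrix.one_apply]
      simp [ite_mul, Finset.sum_ite_eq]
  -- det E = e
  have hdetE : E.det = e := by
    have hsub : E.submatrix Fin.succ Fin.succ = 1 := by
      ext i j
      simp [hE, Matrix.one_apply]
    rw [Matrix.det_succ_column_zero, Fin.sum_univ_succ]
    have h1 : ∀ i : Fin m, E i.succ 0 = 0 := fun i => rfl
    simp only [h1, mul_zero, zero_mul, Finset.sum_const_zero, add_zero, Fin.val_zero,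
      pow_zero, one_mul, Fin.succAbove_zero, hsub, Matrix.det_one, mul_one]
    rfl
  -- the Gram matrix identity
  set G : Matrix (Fin m) (Fin m) ℤ := Matrix.of fun i j => b i ⬝ᵥ B.mulVec (b j) with hG
  have hABA : ∀ i j, (A * B * Aᵀ) i j = A i ⬝ᵥ B.mulVec (A j) := by
    intro i j
    simp only [Matrix.mul_apply, Matrix.transpose_apply, dotProduct, Matrix.mulVec,
      dotProduct, Finset.sum_mul, Finset.mul_sum]
    rw [Finset.sum_comm]
    refine Finset.sum_congr rfl fun k _ => Finset.sum_congr rfl fun l _ => ?_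
    ring
  have hArow0 : ∀ k, A 0 k = h k := fun k => rfl
  have hArow : ∀ (i : Fin m) k, A i.succ k = b i k := fun i k => rfl
  have hA0 : (A 0 : Fin (m+1) → ℤ) = h := rfl
  have hAs : ∀ i : Fin m, (A i.succ : Fin (m+1) → ℤ) = b i := fun i => rfl
  have hdetABA : (A * B * Aᵀ).det = 2 * d * G.det := by
    rw [Matrix.det_succ_row_zero, Fin.sum_univ_succ]
    have h0 : ∀ j : Fin m, (A * B * Aᵀ) 0 j.succ = 0 := by
      intro j
      rw [hABA, hA0, hAs]
      exact hborth j
    have h00 : (A * B * Aᵀ) 0 0 = 2 * d := by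
      rw [hABA, hA0]
      exact hlen
    have hsub : (A * B * Aᵀ).submatrix Fin.succ Fin.succ = G := by
      ext i j
      rw [Matrix.submatrix_apply, hABA, hAs, hAs]
      rfl
    simp only [h0, mul_zero, zero_mul, Finset.sum_const_zero, add_zero, Fin.val_zero,
      pow_zero, one_mul, Fin.succAbove_zero, hsub, h00]
  -- put it all together
  have hdetA : A.det = e * C.det := by rw [hAEC, Matrix.det_mul, hdetE]
  have key : e ^ 2 * B.det = 2 * d * G.det := by
    have h2 := hdetABA
    rw [Matrix.det_mul, Matrix.det_mul, Matrix.det_transpose, hdetA] at h2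
    linear_combination h2 - e ^ 2 * B.det * hCsq
  have habs : |e| ^ 2 * |B.det| = |2 * d| * |G.det| := by
    have h3 := congrArg abs key
    rwa [abs_mul, abs_mul, abs_pow] at h3
  have habs2 : divh * |e| = |2 * d| := by
    rw [he, abs_mul, abs_of_pos hdivpos]
  have h2dne : |2 * d| ≠ 0 := abs_ne_zero.mpr (mul_ne_zero two_ne_zero hd)
  apply mul_left_cancel₀ h2dne
  rw [show |2 * d * B.det| = |2 * d| * |B.det| from abs_mul _ _]
  linear_combination (-(divh ^ 2)) * habs + (|B.det| * (divh * |e| + |2 * d|)) * habs2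
end

section
/- Let L be a nondegenerate integral lattice and r ∈ L a primitive vector with (r,r) ≠ 0. If the reflection σ_r(l) = l - (2(l,r)/(r,r))·r maps L to itself (i.e. σ_r ∈ O(L)), then div(r) divides r² and r² divides 2·div(r), where div(r)ℤ = (r,L). -/
open Matrix

/-
Write `N = (r,r)`. Pairing `r` with itself shows `div(r) ∣ N`. Conversely, choose `v` with
`(v,r) = div(r)`; integrality of `σ_r(v) = v - (2 div(r) / N) r` means `N ∣ 2 div(r) rᵢ` for every
coordinate `i`, and since `r` is primitive its coordinates have no common factor to absorb any part
of `N`, so `N ∣ 2 div(r)`.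
-/

theorem Matrix.IsSymm.dotProduct_mulVec_comm {ι R : Type*} [Fintype ι] [CommSemiring R]
    {B : Matrix ι ι R} (hB : B.IsSymm) (v w : ι → R) : v ⬝ᵥ B *ᵥ w = w ⬝ᵥ B *ᵥ v := by
  conv_lhs => rw [← hB.eq]
  rw [dotProduct_mulVec, vecMul_transpose, dotProduct_comm]

def IsPrimitiveVector {ι : Type*} (r : ι → ℤ) : Prop :=
  ∀ (k : ℤ) (v : ι → ℤ), r = k • v → IsUnit k

theorem IsPrimitiveVector.dvd_of_forall_dvd_mul {ι : Type*} {r : ι → ℤ} (hr : IsPrimitiveVector r)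
    {N a : ℤ} (h : ∀ i, N ∣ a * r i) : N ∣ a := by
  rcases eq_or_ne a 0 with rfl | ha
  · exact dvd_zero N
  obtain ⟨g, N', a', -, hcop, rfl, rfl⟩ := Int.exists_gcd_one' (Int.gcd_pos_of_ne_zero_right N ha)
  have hg : (g : ℤ) ≠ 0 := by intro h; simp [h] at ha
  have hN'r : ∀ i, N' ∣ r i := fun i ↦ by
    have hi : N' * g ∣ a' * r i * g := by simpa only [mul_right_comm] using h i
    exact Int.dvd_of_dvd_mul_right_of_gcd_one ((mul_dvd_mul_iff_right hg).mp hi) hcop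
  have hunit : IsUnit N' := hr N' (fun i ↦ r i / N') <| funext fun i ↦ by
    simp [Int.mul_ediv_cancel' (hN'r i)]
  exact mul_dvd_mul_right hunit.dvd g

theorem Int.dvd_mul_of_cast_eq_sub_div_mul {N a x y r : ℤ} (hN : N ≠ 0)
    (h : (y : ℚ) = x - a / N * r) : N ∣ a * r := by
  refine ⟨x - y, ?_⟩
  have hNQ : (N : ℚ) ≠ 0 := Int.cast_ne_zero.mpr hN
  have hq : (N : ℚ) * (x - y) = a * r := by rw [h]; field_simp; ring
  exact_mod_cast hq.symm

theorem IsPrimitiveVector.dvd_two_mul_of_reflection_integral {ι : Type*} [Fintype ι]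
    {B : Matrix ι ι ℤ} {r : ι → ℤ} (hprim : IsPrimitiveVector r) (hr : r ⬝ᵥ B *ᵥ r ≠ 0)
    {l l' : ι → ℤ} (hl' : ∀ i, (l' i : ℚ) = (l i : ℚ) -
        (2 * ((l ⬝ᵥ B *ᵥ r : ℤ) : ℚ) / ((r ⬝ᵥ B *ᵥ r : ℤ) : ℚ)) * (r i : ℚ)) :
    r ⬝ᵥ B *ᵥ r ∣ 2 * (l ⬝ᵥ B *ᵥ r) :=
  hprim.dvd_of_forall_dvd_mul fun i ↦
    Int.dvd_mul_of_cast_eq_sub_div_mul hr (by exact_mod_cast hl' i)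

theorem stmt_1_general (n : ℕ) (B : Matrix (Fin n) (Fin n) ℤ)
    (hsymm : B.IsSymm)
    (r : Fin n → ℤ)
    (hprim : ∀ (k : ℤ) (v : Fin n → ℤ), r = k • v → IsUnit k)
    (hr : r ⬝ᵥ B.mulVec r ≠ 0)
    (divr : ℤ)
    (hdiv : ∀ m : ℤ, (∃ v : Fin n → ℤ, r ⬝ᵥ B.mulVec v = m) ↔ divr ∣ m)
    (hrefl : ∀ l : Fin n → ℤ, ∃ l' : Fin n → ℤ, ∀ i : Fin n,
      (l' i : ℚ) = (l i : ℚ) -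
        (2 * ((l ⬝ᵥ B.mulVec r : ℤ) : ℚ) / ((r ⬝ᵥ B.mulVec r : ℤ) : ℚ)) * (r i : ℚ)) :
    divr ∣ (r ⬝ᵥ B.mulVec r) ∧ (r ⬝ᵥ B.mulVec r) ∣ 2 * divr := by
  refine ⟨(hdiv _).mp ⟨r, rfl⟩, ?_⟩
  obtain ⟨v, hv⟩ := (hdiv divr).mpr dvd_rfl
  obtain ⟨v', hv'⟩ := hrefl v
  have key := IsPrimitiveVector.dvd_two_mul_of_reflection_integral hprim hr hv'
  rwa [hsymm.dotProduct_mulVec_comm v r, hv] at key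

/-- If `r` is a primitive vector of a nondegenerate lattice with `(r,r) ≠ 0`
and the reflection `σ_r` maps the lattice to itself, then `div(r) ∣ r²` and `r² ∣ 2·div(r)`. -/
theorem stmt_1 (n : ℕ) (B : Matrix (Fin n) (Fin n) ℤ)
    (hsymm : B.IsSymm) (hnd : B.det ≠ 0)
    (r : Fin n → ℤ)
    (hprim : ∀ (k : ℤ) (v : Fin n → ℤ), r = k • v → IsUnit k)
    (hr : r ⬝ᵥ B.mulVec r ≠ 0)
    (divr : ℤ) (hdivpos : 0 < divr)
    (hdiv : ∀ m : ℤ, (∃ v : Fin n → ℤ, r ⬝ᵥ B.mulVec v = m) ↔ divr ∣ m)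
    (hrefl : ∀ l : Fin n → ℤ, ∃ l' : Fin n → ℤ, ∀ i : Fin n,
      (l' i : ℚ) = (l i : ℚ) -
        (2 * ((l ⬝ᵥ B.mulVec r : ℤ) : ℚ) / ((r ⬝ᵥ B.mulVec r : ℤ) : ℚ)) * (r i : ℚ)) :
    divr ∣ (r ⬝ᵥ B.mulVec r) ∧ (r ⬝ᵥ B.mulVec r) ∣ 2 * divr :=
  stmt_1_general n B hsymm r hprim hr divr hdiv hrefl
end

section
/- Let L be a nondegenerate even integral lattice and r ∈ L primitive. The reflection σ_r belongs to the stable orthogonal group Õ(L) (i.e. σ_r preserves L and acts as the identity on the discriminant group L∨/L) if and only if r² = 2 or r² = -2. -/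
open Matrix

/-- The subgroup of vectors of `ℚ^ι` with integral coordinates (the lattice `L` inside `L ⊗ ℚ`). -/
def intVecs (ι : Type*) [Fintype ι] : AddSubgroup (ι → ℚ) where
  carrier := {x | ∀ i, ∃ z : ℤ, x i = z}
  add_mem' := by
    intro a b ha hb i
    obtain ⟨z, hz⟩ := ha i
    obtain ⟨w, hw⟩ := hb i
    exact ⟨z + w, by simp [Pi.add_apply, hz, hw]⟩
  zero_mem' := fun i => ⟨0, by simp⟩
  neg_mem' := by
    intro a ha i
    obtain ⟨z, hz⟩ := ha i
    exact ⟨-z, by simp [Pi.neg_apply, hz]⟩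

/-- The dual lattice `L∨ ⊆ L ⊗ ℚ` of the lattice with Gram matrix `B`:
vectors pairing integrally with every lattice vector. -/
def dualLat {ι : Type*} [Fintype ι] (B : Matrix ι ι ℤ) : AddSubgroup (ι → ℚ) where
  carrier := {x | ∀ v : ι → ℤ, ∃ z : ℤ,
    x ⬝ᵥ (B.map (Int.cast : ℤ → ℚ)).mulVec (fun i => (v i : ℚ)) = z}
  add_mem' := by
    intro a b ha hb v
    obtain ⟨z, hz⟩ := ha v
    obtain ⟨w, hw⟩ := hb v
    exact ⟨z + w, by rw [add_dotProduct, hz, hw]; push_cast; ring⟩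
  zero_mem' := fun v => ⟨0, by simp⟩
  neg_mem' := by
    intro a ha v
    obtain ⟨z, hz⟩ := ha v
    exact ⟨-z, by rw [neg_dotProduct, hz]; push_cast; ring⟩

/-- The reflection `σ_r` extended ℚ-linearly: `σ_r(x) = x - (2(x,r)/(r,r))·r`. -/
def reflQ {ι : Type*} [Fintype ι] (B : Matrix ι ι ℤ) (r : ι → ℤ) (x : ι → ℚ) : ι → ℚ :=
  fun i => x i -
    (2 * (x ⬝ᵥ (B.map (Int.cast : ℤ → ℚ)).mulVec (fun j => (r j : ℚ))) /
      ((r ⬝ᵥ B.mulVec r : ℤ) : ℚ)) * (r i : ℚ)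

/-!
Primitivity of `r` gives (Bézout) an integral `y` with `y ⬝ᵥ r = 1`, and nondegeneracy of the Gram
matrix turns it into `x ∈ L∨` with `(x, r) = 1`. As `σ_r x - x = -(2 (x, r) / r²) r`, the
reflection is trivial on `L∨/L` iff `(2 / r²) r ∈ L`, which by primitivity again means `r² ∣ 2`;
then `σ_r` also preserves `L ⊆ L∨`. An even `r² ∣ 2` is `±2`.
-/

variable {ι : Type*} [Fintype ι]

lemma intCast_dotProduct_mulVec (B : Matrix ι ι ℤ) (l r : ι → ℤ) :
    (fun i => (l i : ℚ)) ⬝ᵥ (B.map (Int.cast : ℤ → ℚ)) *ᵥ (fun j => (r j : ℚ))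
      = ((l ⬝ᵥ B *ᵥ r : ℤ) : ℚ) := by
  simp only [dotProduct, mulVec, map_apply]
  push_cast
  rfl

lemma intCast_mem_intVecs (l : ι → ℤ) : (fun i => (l i : ℚ)) ∈ intVecs ι :=
  fun i => ⟨l i, rfl⟩

lemma intCast_mem_dualLat (B : Matrix ι ι ℤ) (l : ι → ℤ) :
    (fun i => (l i : ℚ)) ∈ dualLat B :=
  fun v => ⟨l ⬝ᵥ B *ᵥ v, intCast_dotProduct_mulVec B l v⟩

lemma reflQ_sub_self (B : Matrix ι ι ℤ) (r : ι → ℤ) (x : ι → ℚ) :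
    reflQ B r x - x =
      (-(2 * (x ⬝ᵥ (B.map (Int.cast : ℤ → ℚ)) *ᵥ (fun j => (r j : ℚ))) /
        ((r ⬝ᵥ B *ᵥ r : ℤ) : ℚ))) • fun i => (r i : ℚ) := by
  ext i
  simp only [reflQ, Pi.sub_apply, Pi.smul_apply, smul_eq_mul]
  ring

lemma exists_dotProduct_eq_one_of_primitive {r : ι → ℤ}
    (hprim : ∀ (k : ℤ) (v : ι → ℤ), r = k • v → IsUnit k) :
    ∃ y : ι → ℤ, y ⬝ᵥ r = 1 := by
  set I : Ideal ℤ := Ideal.span (Set.range r)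
  set d : ℤ := Submodule.IsPrincipal.generator I
  have hspan : Ideal.span {d} = I := Submodule.IsPrincipal.span_singleton_generator I
  have hdvd : ∀ i, d ∣ r i := fun i =>
    Ideal.mem_span_singleton.mp (hspan ▸ Ideal.subset_span ⟨i, rfl⟩)
  have hunit : IsUnit d := hprim d (fun i => r i / d) <| funext fun i =>
    (Int.mul_ediv_cancel' (hdvd i)).symm
  have hone : (1 : ℤ) ∈ I := by
    rw [← hspan, Ideal.span_singleton_eq_top.mpr hunit]
    trivial
  obtain ⟨y, hy⟩ := (Submodule.mem_span_range_iff_exists_fun ℤ).mp hone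
  exact ⟨y, by simpa [dotProduct, smul_eq_mul] using hy⟩

lemma exists_intCast_eq_of_smul_mem_intVecs {r : ι → ℤ}
    (hprim : ∀ (k : ℤ) (v : ι → ℤ), r = k • v → IsUnit k) {q : ℚ}
    (h : q • (fun i => (r i : ℚ)) ∈ intVecs ι) : ∃ m : ℤ, q = m := by
  obtain ⟨y, hy⟩ := exists_dotProduct_eq_one_of_primitive hprim
  choose z hz using h
  refine ⟨y ⬝ᵥ z, ?_⟩
  have hyq : ∑ i, (y i : ℚ) * r i = 1 := by exact_mod_cast hy
  have hz' : ∀ i, q * r i = z i := fun i => by simpa using hz i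
  calc q = q * ∑ i, (y i : ℚ) * r i := by rw [hyq, mul_one]
    _ = ∑ i, (y i : ℚ) * z i := by
      rw [Finset.mul_sum]
      exact Finset.sum_congr rfl fun i _ => by rw [← hz' i]; ring
    _ = ((y ⬝ᵥ z : ℤ) : ℚ) := by push_cast [dotProduct]; rfl

lemma exists_mem_dualLat_pairing_eq_one [DecidableEq ι] {B : Matrix ι ι ℤ} (hnd : B.det ≠ 0)
    {r : ι → ℤ} (hprim : ∀ (k : ℤ) (v : ι → ℤ), r = k • v → IsUnit k) :
    ∃ x ∈ dualLat B, x ⬝ᵥ (B.map (Int.cast : ℤ → ℚ)) *ᵥ (fun j => (r j : ℚ)) = 1 := by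
  obtain ⟨y, hy⟩ := exists_dotProduct_eq_one_of_primitive hprim
  set Bq := B.map (Int.cast : ℤ → ℚ)
  have hdet : IsUnit Bq.det := by
    rw [show Bq.det = (B.det : ℚ) from (Int.castRingHom ℚ).map_det B ▸ rfl]
    exact isUnit_iff_ne_zero.mpr (Int.cast_ne_zero.mpr hnd)
  set x := (fun i => (y i : ℚ)) ᵥ* Bq⁻¹
  have hpair : ∀ v : ι → ℤ, x ⬝ᵥ Bq *ᵥ (fun j => (v j : ℚ)) = ((y ⬝ᵥ v : ℤ) : ℚ) := by
    intro v
    rw [dotProduct_mulVec, vecMul_vecMul, nonsing_inv_mul _ hdet, vecMul_one]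
    push_cast [dotProduct]
    rfl
  exact ⟨x, fun v => ⟨_, hpair v⟩, by rw [hpair, hy, Int.cast_one]⟩

lemma dvd_two_of_forall_reflQ_sub_self_mem_intVecs [DecidableEq ι] {B : Matrix ι ι ℤ}
    (hnd : B.det ≠ 0) {r : ι → ℤ} (hprim : ∀ (k : ℤ) (v : ι → ℤ), r = k • v → IsUnit k)
    (hr : r ⬝ᵥ B *ᵥ r ≠ 0) (h : ∀ x ∈ dualLat B, reflQ B r x - x ∈ intVecs ι) :
    r ⬝ᵥ B *ᵥ r ∣ 2 := by
  obtain ⟨x, hx, hxr⟩ := exists_mem_dualLat_pairing_eq_one hnd hprim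
  have hmem := h x hx
  rw [reflQ_sub_self, hxr, mul_one] at hmem
  obtain ⟨m, hm⟩ := exists_intCast_eq_of_smul_mem_intVecs hprim hmem
  have hrq : ((r ⬝ᵥ B *ᵥ r : ℤ) : ℚ) ≠ 0 := Int.cast_ne_zero.mpr hr
  refine ⟨-m, ?_⟩
  have htwo : (2 : ℚ) = (r ⬝ᵥ B *ᵥ r : ℤ) * (-m : ℤ) := by
    rw [Int.cast_neg, ← hm]
    field_simp
  exact_mod_cast htwo

lemma reflQ_sub_self_mem_intVecs {B : Matrix ι ι ℤ} {r : ι → ℤ} (hN : r ⬝ᵥ B *ᵥ r ∣ 2)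
    {x : ι → ℚ} (hx : x ∈ dualLat B) : reflQ B r x - x ∈ intVecs ι := by
  obtain ⟨c, hc⟩ := hN
  obtain ⟨w, hw⟩ := hx r
  have hcq : (2 : ℚ) = (r ⬝ᵥ B *ᵥ r : ℤ) * c := by exact_mod_cast hc
  have hrq : ((r ⬝ᵥ B *ᵥ r : ℤ) : ℚ) ≠ 0 := by
    rintro h0
    rw [h0, zero_mul] at hcq
    norm_num at hcq
  intro i
  refine ⟨-(c * w * r i), ?_⟩
  rw [reflQ_sub_self, hw, Pi.smul_apply, smul_eq_mul, hcq]
  field_simp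
  push_cast
  ring

lemma reflQ_intCast_mem_intVecs {B : Matrix ι ι ℤ} {r : ι → ℤ} (hN : r ⬝ᵥ B *ᵥ r ∣ 2)
    (l : ι → ℤ) : reflQ B r (fun i => (l i : ℚ)) ∈ intVecs ι := by
  simpa using add_mem (intCast_mem_intVecs l)
    (reflQ_sub_self_mem_intVecs hN (intCast_mem_dualLat B l))

lemma Int.dvd_two_iff_of_even {N : ℤ} (heven : Even N) : N ∣ 2 ↔ N = 2 ∨ N = -2 := by
  constructor
  · intro h
    have hle : N ≤ 2 := Int.le_of_dvd two_pos h
    have hge : -N ≤ 2 := Int.le_of_dvd two_pos (neg_dvd.mpr h)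
    have hne : N ≠ 0 := by rintro rfl; norm_num at h
    obtain ⟨c, rfl⟩ := heven
    omega
  · rintro (h | h) <;> simp [h]

theorem stmt_2_general (n : ℕ) (B : Matrix (Fin n) (Fin n) ℤ)
    (hnd : B.det ≠ 0)
    (heven : ∀ v : Fin n → ℤ, Even (v ⬝ᵥ B.mulVec v))
    (r : Fin n → ℤ)
    (hprim : ∀ (k : ℤ) (v : Fin n → ℤ), r = k • v → IsUnit k)
    (hr : r ⬝ᵥ B.mulVec r ≠ 0) :
    ((∀ l : Fin n → ℤ, reflQ B r (fun i => (l i : ℚ)) ∈ intVecs (Fin n)) ∧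
      (∀ x ∈ dualLat B, reflQ B r x - x ∈ intVecs (Fin n)))
    ↔ (r ⬝ᵥ B.mulVec r = 2 ∨ r ⬝ᵥ B.mulVec r = -2) := by
  rw [← Int.dvd_two_iff_of_even (heven r)]
  exact ⟨fun h => dvd_two_of_forall_reflQ_sub_self_mem_intVecs hnd hprim hr h.2,
    fun hN => ⟨reflQ_intCast_mem_intVecs hN, fun _ => reflQ_sub_self_mem_intVecs hN⟩⟩

/-- For a primitive vector `r` of a nondegenerate even lattice with `(r,r) ≠ 0`,
the reflection `σ_r` lies in the stable orthogonal group `Õ(L)` (it preserves `L` and acts as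
the identity on the discriminant group `L∨/L`) if and only if `r² = 2` or `r² = -2`. -/
theorem stmt_2 (n : ℕ) (B : Matrix (Fin n) (Fin n) ℤ)
    (hsymm : B.IsSymm) (hnd : B.det ≠ 0)
    (heven : ∀ v : Fin n → ℤ, Even (v ⬝ᵥ B.mulVec v))
    (r : Fin n → ℤ)
    (hprim : ∀ (k : ℤ) (v : Fin n → ℤ), r = k • v → IsUnit k)
    (hr : r ⬝ᵥ B.mulVec r ≠ 0) :
    ((∀ l : Fin n → ℤ, reflQ B r (fun i => (l i : ℚ)) ∈ intVecs (Fin n)) ∧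
      (∀ x ∈ dualLat B, reflQ B r x - x ∈ intVecs (Fin n)))
    ↔ (r ⬝ᵥ B.mulVec r = 2 ∨ r ⬝ᵥ B.mulVec r = -2) :=
  stmt_2_general n B hnd heven r hprim hr
end

section
/- Let r be a positive integer and let k_1, …, k_{φ(r)} be the integers with 0 < k_i < r and gcd(k_i, r) = 1, with k_1 ≡ −k_2 (mod r). If φ(r) > 4, then Σ_{i=3}^{φ(r)} { (k_1 + k_i)/r } ≥ 1, where {q} denotes the fractional part. -/
/-!
Put `a = k₁`, `f x = (a + x) % r` and `c = 2a % r`; the sum is `r⁻¹ ∑ f x` over the units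
`x ≠ ±a`, a set stable under `x ↦ r - x`. Since `f x + f (r - x) ≡ c (mod r)`, each such pair
contributes at least `c`, and at least `r` as soon as `c < f x`. So either a single pair with
`c < f x` already gives `r`, or all `φ(r) - 2 ≥ 4` units together give at least `2c`. A pair of
the first kind exists unless `a = r - 1` (then `c = r - 2`) or `2a < r` with no unit strictly
between `a` and `r - a`; as some unit lies in `(r/4, r/2)` once `r ≥ 7`, the latter forces
`4a > r`, i.e. `2c > r`.
-/

open Finset
open scoped Nat

def unitResidues (r : ℕ) : Finset ℕ := {x ∈ range r | r.Coprime x}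

def unitResiduesExceptPair (r a : ℕ) : Finset ℕ := ((unitResidues r).erase a).erase (r - a)

section UnitResidues

variable {r a x : ℕ}

lemma card_unitResidues (r : ℕ) : #(unitResidues r) = φ r :=
  (Nat.totient_eq_card_coprime r).symm

lemma mem_unitResidues : x ∈ unitResidues r ↔ x < r ∧ r.Coprime x := by
  simp [unitResidues]

lemma pos_of_mem_unitResidues (hr : 1 < r) (hx : x ∈ unitResidues r) : 0 < x := by
  rw [mem_unitResidues] at hx
  refine Nat.pos_of_ne_zero fun h0 => ?_
  rw [h0, Nat.coprime_zero_right] at hx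
  omega

lemma sub_mem_unitResidues (hr : 1 < r) (hx : x ∈ unitResidues r) : r - x ∈ unitResidues r := by
  have hx0 := pos_of_mem_unitResidues hr hx
  rw [mem_unitResidues] at hx ⊢
  exact ⟨by omega, (Nat.coprime_self_sub_right hx.1.le).mpr hx.2⟩

lemma two_mul_ne_of_mem_unitResidues (hr : 2 < r) (hx : x ∈ unitResidues r) : 2 * x ≠ r := by
  rintro rfl
  have := (mem_unitResidues.mp hx).2.symm.eq_one_of_dvd (dvd_mul_left x 2)
  omega

lemma mem_unitResiduesExceptPair :
    x ∈ unitResiduesExceptPair r a ↔ x ≠ r - a ∧ x ≠ a ∧ x ∈ unitResidues r := by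
  simp [unitResiduesExceptPair]

lemma sub_mem_unitResiduesExceptPair (hr : 1 < r) (ha : a < r)
    (hx : x ∈ unitResiduesExceptPair r a) : r - x ∈ unitResiduesExceptPair r a := by
  rw [mem_unitResiduesExceptPair] at hx ⊢
  have hxr := (mem_unitResidues.mp hx.2.2).1
  exact ⟨by omega, by omega, sub_mem_unitResidues hr hx.2.2⟩

lemma card_unitResiduesExceptPair (hr : 2 < r) (ha : a ∈ unitResidues r) :
    #(unitResiduesExceptPair r a) = φ r - 2 := by
  have hne := two_mul_ne_of_mem_unitResidues hr ha
  have har := (mem_unitResidues.mp ha).1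
  have hmem : r - a ∈ (unitResidues r).erase a :=
    mem_erase.mpr ⟨by omega, sub_mem_unitResidues (by omega) ha⟩
  rw [unitResiduesExceptPair, card_erase_of_mem hmem, card_erase_of_mem ha, card_unitResidues]
  omega

lemma exists_coprime_between (hr : 7 ≤ r) : ∃ w, r.Coprime w ∧ r < 4 * w ∧ 2 * w < r := by
  obtain ⟨q, hq | hq | hq | hq⟩ :
      ∃ q, r = 4 * q ∨ r = 4 * q + 1 ∨ r = 4 * q + 2 ∨ r = 4 * q + 3 := ⟨r / 4, by omega⟩
  · refine ⟨2 * q - 1, ?_, by omega, by omega⟩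
    rw [show r = 2 + (2 * q - 1) * 2 by omega, Nat.coprime_add_mul_left_left,
      Nat.coprime_two_left]
    exact ⟨q - 1, by omega⟩
  · refine ⟨2 * q, ?_, by omega, by omega⟩
    rw [show r = 1 + 2 * q * 2 by omega, Nat.coprime_add_mul_left_left]
    exact Nat.coprime_one_left _
  · refine ⟨2 * q - 1, ?_, by omega, by omega⟩
    rw [show r = 2 ^ 2 + (2 * q - 1) * 2 by omega, Nat.coprime_add_mul_left_left]
    exact Nat.Coprime.pow_left 2 (Nat.coprime_two_left.mpr ⟨q - 1, by omega⟩)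
  · refine ⟨2 * q + 1, ?_, by omega, by omega⟩
    rw [show r = 1 + (2 * q + 1) * 2 by omega, Nat.coprime_add_mul_left_left]
    exact Nat.coprime_one_left _

end UnitResidues

section ShiftedSum

variable {r a x : ℕ}

lemma add_mod_add_add_sub_mod_mod (hx : x ≤ r) :
    ((a + x) % r + (a + (r - x)) % r) % r = 2 * a % r := by
  rw [← Nat.add_mod, show a + x + (a + (r - x)) = 2 * a + r * 1 by omega,
    Nat.add_mul_mod_self_left]

lemma two_mul_mod_le_add_mod_add_add_sub_mod (hx : x ≤ r) :
    2 * a % r ≤ (a + x) % r + (a + (r - x)) % r :=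
  add_mod_add_add_sub_mod_mod hx ▸ Nat.mod_le _ _

lemma le_add_mod_add_add_sub_mod (hx : x ≤ r) (h : 2 * a % r < (a + x) % r) :
    r ≤ (a + x) % r + (a + (r - x)) % r := by
  by_contra! hlt
  have := add_mod_add_add_sub_mod_mod (a := a) hx
  rw [Nat.mod_eq_of_lt hlt] at this
  omega

lemma mul_two_mul_mod_le_two_mul_sum (hr : 2 < r) (ha : a ∈ unitResidues r) :
    (φ r - 2) * (2 * a % r) ≤ 2 * ∑ x ∈ unitResiduesExceptPair r a, (a + x) % r := by
  have har := (mem_unitResidues.mp ha).1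
  have hlt : ∀ x ∈ unitResiduesExceptPair r a, x < r := fun x hx =>
    (mem_unitResidues.mp (mem_unitResiduesExceptPair.mp hx).2.2).1
  have hreflect : ∑ x ∈ unitResiduesExceptPair r a, (a + x) % r =
      ∑ x ∈ unitResiduesExceptPair r a, (a + (r - x)) % r :=
    sum_nbij' (r - ·) (r - ·) (fun _ => sub_mem_unitResiduesExceptPair (by omega) har)
      (fun _ => sub_mem_unitResiduesExceptPair (by omega) har)
      (fun x hx => by have := hlt x hx; omega) (fun x hx => by have := hlt x hx; omega)
      (fun x hx => by rw [Nat.sub_sub_self (hlt x hx).le])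
  calc (φ r - 2) * (2 * a % r) = ∑ _x ∈ unitResiduesExceptPair r a, 2 * a % r := by
        rw [sum_const, card_unitResiduesExceptPair hr ha, smul_eq_mul]
    _ ≤ ∑ x ∈ unitResiduesExceptPair r a, ((a + x) % r + (a + (r - x)) % r) :=
        sum_le_sum fun x hx => two_mul_mod_le_add_mod_add_add_sub_mod (hlt x hx).le
    _ = 2 * ∑ x ∈ unitResiduesExceptPair r a, (a + x) % r := by
        rw [sum_add_distrib, ← hreflect, two_mul]

lemma le_sum_of_two_mul_mod_lt (hr : 2 < r) (ha : a < r) (hx : x ∈ unitResiduesExceptPair r a)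
    (h : 2 * a % r < (a + x) % r) : r ≤ ∑ x ∈ unitResiduesExceptPair r a, (a + x) % r := by
  have hxU := (mem_unitResiduesExceptPair.mp hx).2.2
  have hxr := (mem_unitResidues.mp hxU).1
  have hne : x ≠ r - x := by have := two_mul_ne_of_mem_unitResidues hr hxU; omega
  exact (le_add_mod_add_add_sub_mod hxr.le h).trans <|
    add_le_sum (f := fun x => (a + x) % r) (fun _ _ => Nat.zero_le _) hx
      (sub_mem_unitResiduesExceptPair (by omega) ha hx) hne

theorem le_sum_add_mod_unitResiduesExceptPair (hr : 7 ≤ r) (hφ : 6 ≤ φ r)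
    (ha : a ∈ unitResidues r) : r ≤ ∑ x ∈ unitResiduesExceptPair r a, (a + x) % r := by
  have ha0 := pos_of_mem_unitResidues (by omega) ha
  have har := (mem_unitResidues.mp ha).1
  suffices (∃ x ∈ unitResiduesExceptPair r a, 2 * a % r < (a + x) % r) ∨ r ≤ 2 * (2 * a % r) by
    rcases this with ⟨x, hx, h⟩ | h
    · exact le_sum_of_two_mul_mod_lt (by omega) har hx h
    · have := mul_two_mul_mod_le_two_mul_sum (by omega) ha
      have : 4 * (2 * a % r) ≤ (φ r - 2) * (2 * a % r) := Nat.mul_le_mul_right _ (by omega)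
      omega
  rcases (two_mul_ne_of_mem_unitResidues (by omega) ha).lt_or_gt with h2a | h2a
  · rw [Nat.mod_eq_of_lt h2a]
    obtain ⟨w, hw, hrw, hwr⟩ := exists_coprime_between hr
    by_cases haw : a < w
    · refine .inl ⟨w, mem_unitResiduesExceptPair.mpr
        ⟨by omega, by omega, mem_unitResidues.mpr ⟨by omega, hw⟩⟩, ?_⟩
      rw [Nat.mod_eq_of_lt (by omega)]
      omega
    · exact .inr (by omega)
  · rw [Nat.mod_eq_sub_mod h2a.le, Nat.mod_eq_of_lt (by omega)]
    by_cases ha1 : a = r - 1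
    · exact .inr (by omega)
    · refine .inl ⟨1, mem_unitResiduesExceptPair.mpr
        ⟨by omega, by omega, mem_unitResidues.mpr ⟨by omega, r.coprime_one_right⟩⟩, ?_⟩
      rw [Nat.mod_eq_of_lt (by omega)]
      omega

end ShiftedSum

lemma seven_le_of_four_lt_totient {r : ℕ} (h : 4 < φ r) : 7 ≤ r := by
  by_contra! hr
  interval_cases r <;> revert h <;> decide

lemma image_eq_unitResidues {r : ℕ} {k : Fin (φ r) → ℕ} (hinj : Function.Injective k)
    (hk : ∀ i, k i ∈ unitResidues r) : univ.image k = unitResidues r :=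
  eq_of_subset_of_card_le (by simpa [subset_iff] using hk) <| by
    rw [card_image_of_injective _ hinj, card_univ, Fintype.card_fin, card_unitResidues]

lemma sum_fract_eq_sum_mod_div {r : ℕ} {k : Fin (φ r) → ℕ} (hinj : Function.Injective k)
    (hk : ∀ i, k i ∈ unitResidues r) {i₀ i₁ : Fin (φ r)} (hk₁ : k i₁ = r - k i₀) :
    ∑ i ∈ (univ.erase i₀).erase i₁, Int.fract (((k i₀ + k i : ℕ) : ℝ) / r) =
      ((∑ x ∈ unitResiduesExceptPair r (k i₀), (k i₀ + x) % r : ℕ) : ℝ) / r := by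
  rw [unitResiduesExceptPair, ← hk₁, ← image_eq_unitResidues hinj hk, ← image_erase hinj,
    ← image_erase hinj, sum_image hinj.injOn, Nat.cast_sum, sum_div]
  exact sum_congr rfl fun i _ => Int.fract_div_natCast_eq_div_natCast_mod

/-- Let `k_1,…,k_{φ(r)}` enumerate the integers in `(0,r)` coprime to `r`,
with `k_1 + k_2 ≡ 0 (mod r)`. If `φ(r) > 4` then `Σ_{i=3}^{φ(r)} {(k_1 + k_i)/r} ≥ 1`. -/
theorem stmt_10 (r : ℕ) (hphi : 4 < Nat.totient r)
    (k : Fin (Nat.totient r) → ℕ)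
    (hinj : Function.Injective k)
    (hrange : ∀ i, 0 < k i ∧ k i < r ∧ Nat.Coprime (k i) r)
    (hk12 : (k ⟨0, by omega⟩ + k ⟨1, by omega⟩) % r = 0) :
    1 ≤ ∑ i ∈ (Finset.univ.erase (⟨0, by omega⟩ : Fin (Nat.totient r))).erase
          (⟨1, by omega⟩ : Fin (Nat.totient r)),
        Int.fract (((k ⟨0, by omega⟩ + k i : ℕ) : ℝ) / (r : ℝ)) := by
  have hr7 := seven_le_of_four_lt_totient hphi
  have hφ : 6 ≤ φ r := by
    have := Nat.totient_even (show 2 < r by omega)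
    rw [Nat.even_iff] at this
    omega
  have hk : ∀ i, k i ∈ unitResidues r := fun i =>
    mem_unitResidues.mpr ⟨(hrange i).2.1, (hrange i).2.2.symm⟩
  have hk₁ : k ⟨1, by omega⟩ = r - k ⟨0, by omega⟩ := by
    have h₀ := hrange ⟨0, by omega⟩
    have h₁ := hrange ⟨1, by omega⟩
    have := Nat.eq_of_dvd_of_lt_two_mul (by omega) (Nat.dvd_of_mod_eq_zero hk12) (by omega)
    omega
  rw [sum_fract_eq_sum_mod_div hinj hk hk₁, le_div_iff₀ (by positivity), one_mul]
  exact_mod_cast le_sum_add_mod_unitResiduesExceptPair hr7 hφ (hk _)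
end

section
/- Let L ⊆ M be a primitive nondegenerate sublattice of signature (2,n) inside a lattice M of signature (2,m), n < m, and let v ∈ M with v² < 0. Write v = α + β with α ∈ L∨ and β ∈ (L⊥)∨ the orthogonal projections. Then the intersection of the period domain 𝒟_L with the rational quadratic divisor 𝒟_v(M) equals: 𝒟_α(L) if α² < 0; the empty set if α ≠ 0 and α² ≥ 0; and all of 𝒟_L if α = 0 (i.e. v ∈ L⊥). Moreover α = 0 if and only if β ∈ L⊥ (i.e. v ⊥ L). -/
open Matrix Finset
set_option maxHeartbeats 1000000 in

lemma core_pos (n : ℕ) (x y c : Fin (n+2) → ℝ)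
    (Q : (Fin (n+2) → ℝ) → (Fin (n+2) → ℝ) → ℝ)
    (hQ : ∀ a b, Q a b = ∑ i : Fin (n+2), (if (i:ℕ) < 2 then (1:ℝ) else -1) * (a i * b i))
    (hxx : 0 < Q x x) (hyy : Q y y = Q x x) (hxy : Q x y = 0)
    (hxc : Q x c = 0) (hyc : Q y c = 0) (hcc : 0 ≤ Q c c) : c = 0 := by
  classical
  set S : Finset (Fin (n+2)) := Finset.univ.filter (fun i : Fin (n+2) => ¬ (i:ℕ) < 2) with hS
  have h01 : (0 : Fin (n+2)) ≠ 1 := by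
    simp [Fin.ext_iff]
  have hsplit : ∀ a b : Fin (n+2) → ℝ,
      Q a b = (a 0 * b 0 + a 1 * b 1) - ∑ i ∈ S, a i * b i := by
    intro a b
    rw [hQ, ← Finset.sum_filter_add_sum_filter_not Finset.univ (fun i : Fin (n+2) => (i:ℕ) < 2)]
    have h1 : (Finset.univ.filter (fun i : Fin (n+2) => (i:ℕ) < 2)) = {0, 1} := by
      ext i
      simp only [Finset.mem_filter, Finset.mem_univ, true_and, Finset.mem_insert,
        Finset.mem_singleton, Fin.ext_iff, Fin.val_zero, Fin.val_one]
      omega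
    rw [h1, Finset.sum_pair h01]
    have h2 : ∑ i ∈ S, (if (i:ℕ) < 2 then (1:ℝ) else -1) * (a i * b i)
        = - ∑ i ∈ S, a i * b i := by
      rw [← Finset.sum_neg_distrib]
      refine Finset.sum_congr rfl (fun i hi => ?_)
      rw [hS, Finset.mem_filter] at hi
      rw [if_neg hi.2]
      ring
    rw [h2]
    norm_num
    ring
  -- bilinearity facts
  have hbil : ∀ (s t : ℝ) (b : Fin (n+2) → ℝ),
      Q (fun i => s * x i + t * y i) b = s * Q x b + t * Q y b := by
    intro s t b
    simp only [hQ]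
    rw [Finset.mul_sum, Finset.mul_sum, ← Finset.sum_add_distrib]
    refine Finset.sum_congr rfl (fun i _ => by ring)
  have hbilr : ∀ (b : Fin (n+2) → ℝ) (s t : ℝ),
      Q b (fun i => s * x i + t * y i) = s * Q b x + t * Q b y := by
    intro b s t
    simp only [hQ]
    rw [Finset.mul_sum, Finset.mul_sum, ← Finset.sum_add_distrib]
    refine Finset.sum_congr rfl (fun i _ => by ring)
  -- the 2x2 matrix
  set M : Matrix (Fin 2) (Fin 2) ℝ := !![x 0, y 0; x 1, y 1] with hM
  have hdet : M.det ≠ 0 := by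
    intro hd
    obtain ⟨w, hw0, hwM⟩ := Matrix.exists_mulVec_eq_zero_iff.mpr hd
    obtain ⟨s, t, e0, e1, hne⟩ : ∃ s t : ℝ, x 0 * s + y 0 * t = 0 ∧
        x 1 * s + y 1 * t = 0 ∧ ¬(s = 0 ∧ t = 0) := by
      refine ⟨w 0, w 1, ?_, ?_, ?_⟩
      · have := congrFun hwM 0
        simpa [hM, Matrix.mulVec, dotProduct, Fin.sum_univ_two] using this
      · have := congrFun hwM 1
        simpa [hM, Matrix.mulVec, dotProduct, Fin.sum_univ_two] using this
      · rintro ⟨h1, h2⟩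
        exact hw0 (funext fun i => by fin_cases i <;> [exact h1; exact h2])
    have hz : Q (fun i => s * x i + t * y i) (fun i => s * x i + t * y i)
        = (s^2 + t^2) * Q x x := by
      rw [hbil, hbilr, hbilr]
      have h1 : Q y x = Q x y := by
        simp only [hQ]; exact Finset.sum_congr rfl (fun i _ => by ring)
      rw [h1, hxy, hyy]; ring
    have hz2 : Q (fun i => s * x i + t * y i) (fun i => s * x i + t * y i) ≤ 0 := by
      rw [hsplit]
      have hz0 : s * x 0 + t * y 0 = 0 := by linarith [e0]
      have hz1 : s * x 1 + t * y 1 = 0 := by linarith [e1]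
      rw [hz0, hz1]
      have : (0:ℝ) ≤ ∑ i ∈ S, (s * x i + t * y i) * (s * x i + t * y i) :=
        Finset.sum_nonneg (fun i _ => mul_self_nonneg _)
      linarith
    apply hne
    constructor
    · by_contra hs
      have h : 0 < s^2 + t^2 := by positivity
      nlinarith [hz, hz2, mul_pos h hxx]
    · by_contra hs
      have h : 0 < s^2 + t^2 := by positivity
      nlinarith [hz, hz2, mul_pos h hxx]
  -- solve for (s,t)
  have hMinv := Matrix.mul_nonsing_inv M (isUnit_iff_ne_zero.mpr hdet)
  obtain ⟨s, t, e0, e1⟩ : ∃ s t : ℝ, x 0 * s + y 0 * t = c 0 ∧ x 1 * s + y 1 * t = c 1 := by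
    have hsol : M *ᵥ (M⁻¹ *ᵥ ![c 0, c 1]) = ![c 0, c 1] := by
      rw [Matrix.mulVec_mulVec, hMinv, Matrix.one_mulVec]
    refine ⟨(M⁻¹ *ᵥ ![c 0, c 1]) 0, (M⁻¹ *ᵥ ![c 0, c 1]) 1, ?_, ?_⟩
    · have := congrFun hsol 0
      simpa [hM, Matrix.mulVec, dotProduct, Fin.sum_univ_two] using this
    · have := congrFun hsol 1
      simpa [hM, Matrix.mulVec, dotProduct, Fin.sum_univ_two] using this
  set z : Fin (n+2) → ℝ := fun i => s * x i + t * y i with hzdef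
  have hz0 : z 0 = c 0 := by simp only [hzdef]; linarith
  have hz1 : z 1 = c 1 := by simp only [hzdef]; linarith
  set A := c 0 * c 0 + c 1 * c 1 with hA
  have hAnn : 0 ≤ A := add_nonneg (mul_self_nonneg _) (mul_self_nonneg _)
  have hzc : Q z c = 0 := by rw [hzdef, hbil, hxc, hyc]; ring
  have hzz : Q z z = (s^2 + t^2) * Q x x := by
    rw [hzdef, hbil, hbilr, hbilr]
    have h1 : Q y x = Q x y := by
      simp only [hQ]; exact Finset.sum_congr rfl (fun i _ => by ring)
    rw [h1, hxy, hyy]; ring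
  have hNzc : ∑ i ∈ S, z i * c i = A := by
    have := hsplit z c
    rw [hzc, hz0, hz1] at this
    simp only [hA]
    linarith [this]
  have hNzz : ∑ i ∈ S, z i * z i = A - (s^2+t^2) * Q x x := by
    have := hsplit z z
    rw [hzz, hz0, hz1] at this
    simp only [hA]; linarith [this]
  have hNcc : ∑ i ∈ S, c i * c i ≤ A := by
    have := hsplit c c
    simp only [hA]; linarith [this, hcc]
  have hNccnn : 0 ≤ ∑ i ∈ S, c i * c i := Finset.sum_nonneg (fun i _ => mul_self_nonneg _)
  have hNzznn : 0 ≤ ∑ i ∈ S, z i * z i := Finset.sum_nonneg (fun i _ => mul_self_nonneg _)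
  have hCS : (∑ i ∈ S, z i * c i)^2 ≤ (∑ i ∈ S, z i ^ 2) * (∑ i ∈ S, c i ^ 2) :=
    Finset.sum_mul_sq_le_sq_mul_sq S z c
  have hsq1 : ∑ i ∈ S, z i ^ 2 = ∑ i ∈ S, z i * z i :=
    Finset.sum_congr rfl (fun i _ => sq (z i) ▸ by ring)
  have hsq2 : ∑ i ∈ S, c i ^ 2 = ∑ i ∈ S, c i * c i :=
    Finset.sum_congr rfl (fun i _ => by ring)
  rw [hsq1, hsq2, hNzc, hNzz] at hCS
  -- Case analysis on A
  have hA0 : A = 0 := by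
    by_contra hA0
    have hApos : 0 < A := lt_of_le_of_ne hAnn (Ne.symm hA0)
    have h1 : (A - (s^2+t^2) * Q x x) * (∑ i ∈ S, c i * c i) ≤ (A - (s^2+t^2)*Q x x) * A := by
      apply mul_le_mul_of_nonneg_left hNcc
      rw [← hNzz]; exact hNzznn
    have h2 : A^2 ≤ (A - (s^2+t^2)*Q x x) * A := le_trans hCS h1
    have h3 : (s^2+t^2) * Q x x ≤ 0 := by nlinarith
    have hst : s = 0 ∧ t = 0 := by
      constructor
      · by_contra hs
        have h : 0 < s^2 + t^2 := by positivity
        nlinarith [mul_pos h hxx]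
      · by_contra hs
        have h : 0 < s^2 + t^2 := by positivity
        nlinarith [mul_pos h hxx]
    have : c 0 = 0 := by rw [← hz0, hzdef]; simp [hst.1, hst.2]
    have h4 : c 1 = 0 := by rw [← hz1, hzdef]; simp [hst.1, hst.2]
    rw [hA] at hApos
    nlinarith [this, h4]
  -- now A = 0: c 0 = c 1 = 0 and the negative part vanishes
  have hc0 : c 0 = 0 := by
    have := mul_self_nonneg (c 0); have := mul_self_nonneg (c 1)
    exact mul_self_eq_zero.mp (by linarith [hA0])
  have hc1 : c 1 = 0 := by
    have := mul_self_nonneg (c 0); have := mul_self_nonneg (c 1)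
    exact mul_self_eq_zero.mp (by linarith [hA0])
  have hNcc0 : ∑ i ∈ S, c i * c i = 0 := by
    have := hsplit c c
    rw [hc0, hc1] at this
    linarith [this, hcc, hNccnn]
  have hall : ∀ i ∈ S, c i * c i = 0 := by
    intro i hi
    have := (Finset.sum_eq_zero_iff_of_nonneg (fun i _ => mul_self_nonneg (c i))).mp hNcc0
    exact this i hi
  funext i
  by_cases hi : (i:ℕ) < 2
  · have : i = 0 ∨ i = 1 := by
      rcases (by omega : (i:ℕ) = 0 ∨ (i:ℕ) = 1) with h | h
      · left; exact Fin.ext h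
      · right; exact Fin.ext h
    rcases this with h | h <;> subst h <;> simpa using (by assumption : _)
  · have hmem : i ∈ S := by rw [hS, Finset.mem_filter]; exact ⟨Finset.mem_univ i, hi⟩
    have := hall i hmem
    have : c i = 0 := mul_self_eq_zero.mp this
    simpa using this
open Matrix Finset

lemma aux_symm {R : Type*} [CommRing R] {ι : Type} [Fintype ι] (M : Matrix ι ι R)
    (hM : Mᵀ = M) (x y : ι → R) : x ⬝ᵥ M *ᵥ y = y ⬝ᵥ M *ᵥ x := by
  rw [Matrix.dotProduct_mulVec, ← Matrix.mulVec_transpose, dotProduct_comm, hM]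

lemma aux_cast {R S : Type*} [CommRing R] [CommRing S] (f : R →+* S) {ι : Type} [Fintype ι]
    (M : Matrix ι ι R) (x y : ι → R) :
    f (x ⬝ᵥ M *ᵥ y) = (f ∘ x) ⬝ᵥ (M.map f) *ᵥ (f ∘ y) := by
  rw [RingHom.map_dotProduct]
  congr 1
  funext i
  exact f.map_mulVec M y i

lemma aux_expand1 {R : Type*} [CommRing R] {ι : Type} [Fintype ι] [DecidableEq ι]
    (M : Matrix ι ι R) {N : ℕ} (cv : Fin N → (ι → R)) (a : Fin N → R) (y : ι → R) :
    (∑ k, a k • cv k) ⬝ᵥ M *ᵥ y = ∑ k, a k * (cv k ⬝ᵥ M *ᵥ y) := by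
  simp only [dotProduct, Finset.sum_apply, Pi.smul_apply, smul_eq_mul, Finset.sum_mul]
  rw [Finset.sum_comm]
  refine Finset.sum_congr rfl (fun k _ => ?_)
  rw [Finset.mul_sum]
  exact Finset.sum_congr rfl (fun i _ => by ring)

lemma aux_expand2 {R : Type*} [CommRing R] {ι : Type} [Fintype ι] [DecidableEq ι]
    (M : Matrix ι ι R) {N : ℕ} (cv : Fin N → (ι → R)) (b : Fin N → R) (x : ι → R) :
    x ⬝ᵥ M *ᵥ (∑ l, b l • cv l) = ∑ l, b l * (x ⬝ᵥ M *ᵥ cv l) := by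
  rw [Matrix.dotProduct_mulVec]
  have h : ∀ l, x ⬝ᵥ M *ᵥ cv l = (x ᵥ* M) ⬝ᵥ cv l := fun l => Matrix.dotProduct_mulVec _ _ _
  simp only [h]
  simp only [dotProduct, Finset.sum_apply, Pi.smul_apply, smul_eq_mul, Finset.mul_sum]
  rw [Finset.sum_comm]
  exact Finset.sum_congr rfl fun l _ => Finset.sum_congr rfl (fun j _ => by ring)

lemma aux_expand {R : Type*} [CommRing R] {ι : Type} [Fintype ι] [DecidableEq ι]
    (M : Matrix ι ι R) {N : ℕ} (cv : Fin N → (ι → R)) (a b : Fin N → R) :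
    (∑ k, a k • cv k) ⬝ᵥ M *ᵥ (∑ l, b l • cv l)
      = ∑ k, ∑ l, a k * b l * (cv k ⬝ᵥ M *ᵥ cv l) := by
  rw [aux_expand1]
  refine Finset.sum_congr rfl (fun k _ => ?_)
  rw [aux_expand2, Finset.mul_sum]
  exact Finset.sum_congr rfl (fun l _ => by ring)

lemma aux_collapse {N : ℕ} (d : Fin N → ℝ) (a b : Fin N → ℝ) :
    ∑ k, ∑ l, a k * b l * (if k = l then d k else 0) = ∑ k, d k * (a k * b k) := by
  refine Finset.sum_congr rfl (fun k _ => ?_)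
  rw [Finset.sum_eq_single k]
  · simp; ring
  · intro l _ hl; simp [Ne.symm hl]
  · simp

lemma aux_re_im {ι : Type} [Fintype ι] (M : Matrix ι ι ℤ) (Z W : ι → ℂ) :
    (Z ⬝ᵥ (M.map (Int.cast : ℤ → ℂ)) *ᵥ W).re
      = (fun i => (Z i).re) ⬝ᵥ (M.map (Int.cast : ℤ → ℝ)) *ᵥ (fun i => (W i).re)
        - (fun i => (Z i).im) ⬝ᵥ (M.map (Int.cast : ℤ → ℝ)) *ᵥ (fun i => (W i).im)
    ∧ (Z ⬝ᵥ (M.map (Int.cast : ℤ → ℂ)) *ᵥ W).im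
      = (fun i => (Z i).re) ⬝ᵥ (M.map (Int.cast : ℤ → ℝ)) *ᵥ (fun i => (W i).im)
        + (fun i => (Z i).im) ⬝ᵥ (M.map (Int.cast : ℤ → ℝ)) *ᵥ (fun i => (W i).re) := by
  have key : ∀ i, ((M.map (Int.cast : ℤ → ℂ) *ᵥ W) i).re
        = (M.map (Int.cast : ℤ → ℝ) *ᵥ (fun j => (W j).re)) i
      ∧ ((M.map (Int.cast : ℤ → ℂ) *ᵥ W) i).im
        = (M.map (Int.cast : ℤ → ℝ) *ᵥ (fun j => (W j).im)) i := by
    intro i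
    constructor
    · simp [Matrix.mulVec, dotProduct, Complex.re_sum, Complex.mul_re]
    · simp [Matrix.mulVec, dotProduct, Complex.im_sum, Complex.mul_im]
  constructor
  · simp only [dotProduct, Complex.re_sum, Complex.mul_re]
    rw [← Finset.sum_sub_distrib]
    refine Finset.sum_congr rfl (fun i _ => ?_)
    rw [(key i).1, (key i).2]
  · simp only [dotProduct, Complex.im_sum, Complex.mul_im]
    rw [← Finset.sum_add_distrib]
    refine Finset.sum_congr rfl (fun i _ => ?_)
    rw [(key i).1, (key i).2]
open Matrix Finset

lemma castZ_span {ι : Type} [Fintype ι] {N : ℕ} (bL : Fin N → (ι → ℤ))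
    (F : Type*) [Field F] (w : ι → ℤ)
    (hw : w ∈ Submodule.span ℤ (Set.range bL)) :
    (fun i => ((w i : ℤ) : F)) ∈
      Submodule.span F (Set.range (fun j => fun i => ((bL j i : ℤ) : F))) := by
  induction hw using Submodule.span_induction with
  | mem x hx =>
    obtain ⟨j, rfl⟩ := hx
    exact Submodule.subset_span ⟨j, rfl⟩
  | zero =>
    rw [show (fun i => (((0 : ι → ℤ) i : ℤ) : F)) = 0 from funext fun i => by simp]
    exact Submodule.zero_mem _
  | add x y hx hy px py =>
    have : (fun i => (((x + y) i : ℤ) : F))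
        = (fun i => ((x i : ℤ) : F)) + fun i => ((y i : ℤ) : F) := by
      funext i; simp
    rw [this]; exact Submodule.add_mem _ px py
  | smul k x hx px =>
    have : (fun i => (((k • x) i : ℤ) : F))
        = ((k : ℤ) : F) • fun i => ((x i : ℤ) : F) := by
      funext i; simp
    rw [this]; exact Submodule.smul_mem _ _ px

lemma castL_spanR {ι : Type} [Fintype ι] {N : ℕ} (bL : Fin N → (ι → ℤ))
    (L : Submodule ℤ (ι → ℤ))
    (hbLspan : ∀ x ∈ L, x ∈ Submodule.span ℤ (Set.range bL))
    (α : ι → ℚ)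
    (hαspan : α ∈ Submodule.span ℚ
      ((fun w : ι → ℤ => fun i => (w i : ℚ)) '' (L : Set (ι → ℤ)))) :
    (fun i => ((α i : ℚ) : ℝ)) ∈
      Submodule.span ℝ (Set.range (fun j => fun i => ((bL j i : ℤ) : ℝ))) := by
  induction hαspan using Submodule.span_induction with
  | mem x hx =>
    obtain ⟨w, hw, rfl⟩ := hx
    have : (fun i => (((fun i => ((w i : ℤ) : ℚ)) i : ℚ) : ℝ))
        = fun i => ((w i : ℤ) : ℝ) := by funext i; push_cast; rfl
    rw [this]
    exact castZ_span bL ℝ w (hbLspan w hw)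
  | zero =>
    rw [show (fun i => (((0 : ι → ℚ) i : ℚ) : ℝ)) = 0 from funext fun i => by simp]
    exact Submodule.zero_mem _
  | add x y hx hy px py =>
    have : (fun i => (((x + y) i : ℚ) : ℝ))
        = (fun i => ((x i : ℚ) : ℝ)) + fun i => ((y i : ℚ) : ℝ) := by
      funext i; simp
    rw [this]; exact Submodule.add_mem _ px py
  | smul q x hx px =>
    have : (fun i => (((q • x) i : ℚ) : ℝ))
        = ((q : ℚ) : ℝ) • fun i => ((x i : ℚ) : ℝ) := by
      funext i; simp
    rw [this]; exact Submodule.smul_mem _ _ px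

lemma castL_spanQ {ι : Type} [Fintype ι] {N : ℕ} (bL : Fin N → (ι → ℤ))
    (L : Submodule ℤ (ι → ℤ))
    (hbLspan : ∀ x ∈ L, x ∈ Submodule.span ℤ (Set.range bL))
    (α : ι → ℚ)
    (hαspan : α ∈ Submodule.span ℚ
      ((fun w : ι → ℤ => fun i => (w i : ℚ)) '' (L : Set (ι → ℤ)))) :
    α ∈ Submodule.span ℚ (Set.range (fun j => fun i => ((bL j i : ℤ) : ℚ))) := by
  induction hαspan using Submodule.span_induction with
  | mem x hx =>
    obtain ⟨w, hw, rfl⟩ := hx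
    exact castZ_span bL ℚ w (hbLspan w hw)
  | zero => exact Submodule.zero_mem _
  | add x y hx hy px py => exact Submodule.add_mem _ px py
  | smul q x hx px => exact Submodule.smul_mem _ _ px

lemma reim_span {ι : Type} [Fintype ι] {N : ℕ} (bL : Fin N → (ι → ℤ))
    (L : Submodule ℤ (ι → ℤ))
    (hbLspan : ∀ x ∈ L, x ∈ Submodule.span ℤ (Set.range bL))
    (Z : ι → ℂ)
    (hZ : Z ∈ Submodule.span ℂ
      ((fun w : ι → ℤ => fun i => (w i : ℂ)) '' (L : Set (ι → ℤ)))) :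
    (fun i => (Z i).re) ∈
        Submodule.span ℝ (Set.range (fun j => fun i => ((bL j i : ℤ) : ℝ)))
    ∧ (fun i => (Z i).im) ∈
        Submodule.span ℝ (Set.range (fun j => fun i => ((bL j i : ℤ) : ℝ))) := by
  induction hZ using Submodule.span_induction with
  | mem x hx =>
    obtain ⟨w, hw, rfl⟩ := hx
    constructor
    · have : (fun i => ((fun i => ((w i : ℤ) : ℂ)) i).re)
          = fun i => ((w i : ℤ) : ℝ) := by funext i; simp
      rw [this]; exact castZ_span bL ℝ w (hbLspan w hw)
    · have : (fun i => ((fun i => ((w i : ℤ) : ℂ)) i).im) = 0 := by funext i; simp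
      rw [this]; exact Submodule.zero_mem _
  | zero =>
    constructor
    · rw [show (fun i => ((0 : ι → ℂ) i).re) = 0 from funext fun i => by simp]
      exact Submodule.zero_mem _
    · rw [show (fun i => ((0 : ι → ℂ) i).im) = 0 from funext fun i => by simp]
      exact Submodule.zero_mem _
  | add x y hx hy px py =>
    constructor
    · have : (fun i => ((x + y) i).re) = (fun i => (x i).re) + fun i => (y i).re := by
        funext i; simp
      rw [this]; exact Submodule.add_mem _ px.1 py.1
    · have : (fun i => ((x + y) i).im) = (fun i => (x i).im) + fun i => (y i).im := by
        funext i; simp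
      rw [this]; exact Submodule.add_mem _ px.2 py.2
  | smul a x hx px =>
    constructor
    · have : (fun i => ((a • x) i).re)
          = a.re • (fun i => (x i).re) - a.im • fun i => (x i).im := by
        funext i; simp [Complex.mul_re, mul_comm]
      rw [this]
      exact Submodule.sub_mem _ (Submodule.smul_mem _ _ px.1) (Submodule.smul_mem _ _ px.2)
    · have : (fun i => ((a • x) i).im)
          = a.re • (fun i => (x i).im) + a.im • fun i => (x i).re := by
        funext i; simp [Complex.mul_im, mul_comm]
      rw [this]
      exact Submodule.add_mem _ (Submodule.smul_mem _ _ px.2) (Submodule.smul_mem _ _ px.1)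

open Matrix

/-- The (two-component) period domain of a sublattice `L` of the lattice `ℤ^ι` with Gram
matrix `B`: homogeneous coordinates `Z ∈ L ⊗ ℂ` with `(Z,Z) = 0` and `(Z,Z̄) > 0`. -/
def periodCone (ι : Type) [Fintype ι] [DecidableEq ι] (B : Matrix ι ι ℤ)
    (L : Submodule ℤ (ι → ℤ)) : Set (ι → ℂ) :=
  {Z | Z ∈ Submodule.span ℂ
        ((fun w : ι → ℤ => fun i => (w i : ℂ)) '' (L : Set (ι → ℤ))) ∧
    Z ⬝ᵥ (B.map (Int.cast : ℤ → ℂ)).mulVec Z = 0 ∧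
    0 < (Z ⬝ᵥ (B.map (Int.cast : ℤ → ℂ)).mulVec (star Z)).re}


/-- Let `L` be a primitive nondegenerate sublattice of signature `(2,n)` of a
lattice `M = ℤ^ι` of signature `(2,m)`, `n < m`, and `v ∈ M` with `v² < 0`. Writing
`v = α + β` with `α ∈ L∨` the orthogonal projection, the intersection `𝒟_L ∩ 𝒟_v(M)`
equals `𝒟_α(L)` if `α² < 0`; is empty if `α ≠ 0` and `α² ≥ 0`; and is all of `𝒟_L` if
`α = 0`. Moreover `α = 0` iff `v ⊥ L`. -/
theorem stmt_19 (ι : Type) [Fintype ι] [DecidableEq ι] (B : Matrix ι ι ℤ)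
    (hsymm : B.IsSymm) (n m : ℕ) (hnm : n < m) (hcard : Fintype.card ι = m + 2)
    (L : Submodule ℤ (ι → ℤ))
    (hLprim : ∀ (k : ℤ) (w : ι → ℤ), k ≠ 0 → k • w ∈ L → w ∈ L)
    (bL : Fin (n + 2) → (ι → ℤ)) (hbLmem : ∀ i, bL i ∈ L)
    (hbLind : LinearIndependent ℤ bL)
    (hbLspan : ∀ x ∈ L, x ∈ Submodule.span ℤ (Set.range bL))
    (hsigL : ∃ P : Matrix (Fin (n + 2)) (Fin (n + 2)) ℝ, P.det ≠ 0 ∧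
      Pᵀ * (Matrix.of fun i j => ((bL i ⬝ᵥ B.mulVec (bL j) : ℤ) : ℝ)) * P =
        Matrix.diagonal (fun i : Fin (n + 2) => if (i : ℕ) < 2 then (1 : ℝ) else -1))
    (hsigM : ∃ (P : Matrix ι ι ℝ) (dvec : ι → ℝ), P.det ≠ 0 ∧
      Pᵀ * (B.map (Int.cast : ℤ → ℝ)) * P = Matrix.diagonal dvec ∧
      (∀ i, dvec i = 1 ∨ dvec i = -1) ∧
      (Finset.univ.filter (fun i => dvec i = 1)).card = 2)
    (v : ι → ℤ) (hv : v ⬝ᵥ B.mulVec v < 0)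
    (α : ι → ℚ)
    (hαspan : α ∈ Submodule.span ℚ
      ((fun w : ι → ℤ => fun i => (w i : ℚ)) '' (L : Set (ι → ℤ))))
    (hαproj : ∀ l ∈ L,
      α ⬝ᵥ (B.map (Int.cast : ℤ → ℚ)).mulVec (fun i => ((l : ι → ℤ) i : ℚ))
        = ((v ⬝ᵥ B.mulVec l : ℤ) : ℚ)) :
    (α ⬝ᵥ (B.map (Int.cast : ℤ → ℚ)).mulVec α < 0 →
      {Z ∈ periodCone ι B L | Z ⬝ᵥ (B.map (Int.cast : ℤ → ℂ)).mulVec (fun i => (v i : ℂ)) = 0}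
        = {Z ∈ periodCone ι B L |
            Z ⬝ᵥ (B.map (Int.cast : ℤ → ℂ)).mulVec (fun i => ((α i : ℚ) : ℂ)) = 0}) ∧
    (α ≠ 0 → 0 ≤ α ⬝ᵥ (B.map (Int.cast : ℤ → ℚ)).mulVec α →
      {Z ∈ periodCone ι B L | Z ⬝ᵥ (B.map (Int.cast : ℤ → ℂ)).mulVec (fun i => (v i : ℂ)) = 0}
        = ∅) ∧
    (α = 0 →
      {Z ∈ periodCone ι B L | Z ⬝ᵥ (B.map (Int.cast : ℤ → ℂ)).mulVec (fun i => (v i : ℂ)) = 0}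
        = periodCone ι B L) ∧
    (α = 0 ↔ ∀ l ∈ L, v ⬝ᵥ B.mulVec l = 0) := by
  classical
  -- symmetric transposes
  have hBq : (B.map (Int.cast : ℤ → ℚ))ᵀ = B.map (Int.cast : ℤ → ℚ) := hsymm.map _
  have hBc : (B.map (Int.cast : ℤ → ℂ))ᵀ = B.map (Int.cast : ℤ → ℂ) := hsymm.map _
  have hBr : (B.map (Int.cast : ℤ → ℝ))ᵀ = B.map (Int.cast : ℤ → ℝ) := hsymm.map _
  have hBsymm : Bᵀ = B := hsymm
  -- the fundamental equivalence (Z,v) = (Z,α) on the complex span of L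
  have hequiv : ∀ Z : ι → ℂ, Z ∈ Submodule.span ℂ
      ((fun w : ι → ℤ => fun i => (w i : ℂ)) '' (L : Set (ι → ℤ))) →
      Z ⬝ᵥ (B.map (Int.cast : ℤ → ℂ)).mulVec (fun i => (v i : ℂ))
        = Z ⬝ᵥ (B.map (Int.cast : ℤ → ℂ)).mulVec (fun i => ((α i : ℚ) : ℂ)) := by
    intro Z hZ
    induction hZ using Submodule.span_induction with
    | mem x hx =>
      obtain ⟨w, hw, rfl⟩ := hx
      -- LHS = ((w ⬝ᵥ B *ᵥ v : ℤ) : ℂ)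
      have hL : (fun i => ((w i : ℤ) : ℂ)) ⬝ᵥ (B.map (Int.cast : ℤ → ℂ)) *ᵥ
            (fun i => ((v i : ℤ) : ℂ)) = ((w ⬝ᵥ B *ᵥ v : ℤ) : ℂ) := by
        have := aux_cast (Int.castRingHom ℂ) B w v
        simpa [Function.comp_def] using this.symm
      -- RHS = (((v ⬝ᵥ B *ᵥ w : ℤ) : ℚ) : ℂ)
      have hR : (fun i => ((w i : ℤ) : ℂ)) ⬝ᵥ (B.map (Int.cast : ℤ → ℂ)) *ᵥ
            (fun i => ((α i : ℚ) : ℂ)) = (((v ⬝ᵥ B *ᵥ w : ℤ) : ℚ) : ℂ) := by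
        have hmap : (B.map (Int.cast : ℤ → ℚ)).map ⇑(Rat.castHom ℂ)
            = B.map (Int.cast : ℤ → ℂ) := by
          ext i j
          simp [Matrix.map_apply]
        have hcast := aux_cast (Rat.castHom ℂ) (B.map (Int.cast : ℤ → ℚ))
          (fun i => ((w i : ℤ) : ℚ)) α
        have hsym2 : (fun i => ((w i : ℤ) : ℚ)) ⬝ᵥ (B.map (Int.cast : ℤ → ℚ)) *ᵥ α
            = α ⬝ᵥ (B.map (Int.cast : ℤ → ℚ)) *ᵥ (fun i => ((w i : ℤ) : ℚ)) :=
          aux_symm _ hBq _ _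
        rw [hsym2, hαproj w hw] at hcast
        have e1 : (fun i => ((w i : ℤ) : ℂ))
            = (⇑(Rat.castHom ℂ) ∘ fun i => ((w i : ℤ) : ℚ)) := by
          funext i; simp
        have e2 : (fun i => ((α i : ℚ) : ℂ)) = (⇑(Rat.castHom ℂ) ∘ α) := by
          funext i; simp
        rw [e1, e2, ← hmap, ← hcast]
        simp
      rw [hL, hR]
      have : w ⬝ᵥ B *ᵥ v = v ⬝ᵥ B *ᵥ w := aux_symm B hBsymm w v
      rw [this]
      push_cast
      ring
    | zero => simp
    | add x y hx hy px py => rw [add_dotProduct, add_dotProduct, px, py]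
    | smul a x hx px => rw [smul_dotProduct, smul_dotProduct, px]
  refine ⟨?_, ?_, ?_, ?_⟩
  · -- Part 1
    intro _
    ext Z
    simp only [Set.mem_setOf_eq]
    constructor
    · rintro ⟨h1, h2⟩
      exact ⟨h1, by rw [← hequiv Z h1.1]; exact h2⟩
    · rintro ⟨h1, h2⟩
      exact ⟨h1, by rw [hequiv Z h1.1]; exact h2⟩
  · -- Part 2
    intro hα hαnn
    rw [Set.eq_empty_iff_forall_notMem]
    rintro Z ⟨hZp, hZv⟩
    obtain ⟨hZspan, hZZ, hZpos⟩ := hZp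
    have hZα : Z ⬝ᵥ (B.map (Int.cast : ℤ → ℂ)) *ᵥ (fun i => ((α i : ℚ) : ℂ)) = 0 := by
      rw [← hequiv Z hZspan]; exact hZv
    obtain ⟨P, hPdet, hPG⟩ := hsigL
    set Br := B.map (Int.cast : ℤ → ℝ) with hBrdef
    set X : ι → ℝ := fun i => (Z i).re with hXdef
    set Y : ι → ℝ := fun i => (Z i).im with hYdef
    set αr : ι → ℝ := fun i => ((α i : ℚ) : ℝ) with hαrdef
    have hsymr : ∀ u w : ι → ℝ, u ⬝ᵥ Br *ᵥ w = w ⬝ᵥ Br *ᵥ u := fun u w => aux_symm _ hBr u w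
    -- real bilinear relations
    have hZZ' := aux_re_im B Z Z
    rw [hZZ] at hZZ'
    obtain ⟨e1, e2⟩ := hZZ'
    simp only [Complex.zero_re, Complex.zero_im] at e1 e2
    have hxy : X ⬝ᵥ Br *ᵥ Y = 0 := by
      have := hsymr Y X
      rw [← hBrdef] at e2
      linarith [e2, this]
    have e1' : X ⬝ᵥ Br *ᵥ X = Y ⬝ᵥ Br *ᵥ Y := by
      rw [← hBrdef] at e1
      linarith [e1]
    -- positivity
    have hstar := (aux_re_im B Z (star Z)).1
    have hre : (fun i => ((star Z) i).re) = X := funext fun i => by simp [hXdef]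
    have him : (fun i => ((star Z) i).im) = fun i => -(Y i) := funext fun i => by simp [hYdef]
    rw [hre, him] at hstar
    have hnegY : (B.map (Int.cast : ℤ → ℝ)) *ᵥ (fun i => -(Y i)) = -((B.map (Int.cast : ℤ → ℝ)) *ᵥ Y) := by
      rw [show (fun i => -(Y i)) = -Y from rfl, Matrix.mulVec_neg]
    rw [hnegY, dotProduct_neg] at hstar
    rw [hstar, ← hBrdef] at hZpos
    have hXX : 0 < X ⬝ᵥ Br *ᵥ X := by
      have := e1'
      linarith [hZpos]
    -- alpha relations
    have hZα' := aux_re_im B Z (fun i => ((α i : ℚ) : ℂ))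
    rw [hZα] at hZα'
    have hαre : (fun i => ((fun i => ((α i : ℚ) : ℂ)) i).re) = αr := funext fun i => by
      simp [hαrdef]
    have hαim : (fun i => ((fun i => ((α i : ℚ) : ℂ)) i).im) = (0 : ι → ℝ) := funext fun i => by
      simp
    rw [hαre, hαim] at hZα'
    obtain ⟨f1, f2⟩ := hZα'
    simp only [Complex.zero_re, Complex.zero_im, Matrix.mulVec_zero, dotProduct_zero] at f1 f2
    rw [← hBrdef] at f1 f2
    have hxc : X ⬝ᵥ Br *ᵥ αr = 0 := by linarith [f1]
    have hyc : Y ⬝ᵥ Br *ᵥ αr = 0 := by linarith [f2]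
    -- spans and coordinates
    set bLr : Fin (n+2) → (ι → ℝ) := fun j => fun i => ((bL j i : ℤ) : ℝ) with hbLrdef
    have hXmem : X ∈ Submodule.span ℝ (Set.range bLr) := (reim_span bL L hbLspan Z hZspan).1
    have hYmem : Y ∈ Submodule.span ℝ (Set.range bLr) := (reim_span bL L hbLspan Z hZspan).2
    have hαmem : αr ∈ Submodule.span ℝ (Set.range bLr) := castL_spanR bL L hbLspan α hαspan
    -- diagonalizing vectors
    set cv : Fin (n+2) → (ι → ℝ) := fun k => ∑ j, P j k • bLr j with hcvdef
    have hij : ∀ j j', bLr j ⬝ᵥ Br *ᵥ bLr j' = ((bL j ⬝ᵥ B *ᵥ bL j' : ℤ) : ℝ) := fun j j' => by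
      simpa [Function.comp_def] using (aux_cast (Int.castRingHom ℝ) B (bL j) (bL j')).symm
    have hGram : ∀ k l, cv k ⬝ᵥ Br *ᵥ cv l
        = if k = l then (if (k : ℕ) < 2 then (1:ℝ) else -1) else 0 := by
      intro k l
      have e := aux_expand Br bLr (fun j => P j k) (fun j => P j l)
      have hmul : (Pᵀ * (Matrix.of fun i j => ((bL i ⬝ᵥ B *ᵥ bL j : ℤ) : ℝ)) * P) k l
          = ∑ j, ∑ j', P j k * P j' l * ((bL j ⬝ᵥ B *ᵥ bL j' : ℤ) : ℝ) := by
        simp only [Matrix.mul_apply, Matrix.transpose_apply, Matrix.of_apply, Finset.sum_mul]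
        rw [Finset.sum_comm]
        exact Finset.sum_congr rfl fun j _ => Finset.sum_congr rfl fun j' _ => by ring
      calc cv k ⬝ᵥ Br *ᵥ cv l
          = ∑ j, ∑ j', P j k * P j' l * (bLr j ⬝ᵥ Br *ᵥ bLr j') := e
        _ = (Pᵀ * (Matrix.of fun i j => ((bL i ⬝ᵥ B *ᵥ bL j : ℤ) : ℝ)) * P) k l := by
            rw [hmul]
            exact Finset.sum_congr rfl fun j _ => Finset.sum_congr rfl fun j' _ => by
              rw [hij]
        _ = Matrix.diagonal (fun i : Fin (n + 2) => if (i : ℕ) < 2 then (1 : ℝ) else -1) k l := by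
            rw [hPG]
        _ = if k = l then (if (k : ℕ) < 2 then (1:ℝ) else -1) else 0 := by
            rw [Matrix.diagonal_apply]
    have hsub : Submodule.span ℝ (Set.range bLr) ≤ Submodule.span ℝ (Set.range cv) := by
      rw [Submodule.span_le]
      rintro _ ⟨j, rfl⟩
      have hPinv := Matrix.mul_nonsing_inv P (isUnit_iff_ne_zero.mpr hPdet)
      have key : ∑ k, P⁻¹ k j • cv k = bLr j := by
        calc ∑ k, P⁻¹ k j • cv k
            = ∑ k, ∑ j', (P j' k * P⁻¹ k j) • bLr j' := by
              refine Finset.sum_congr rfl fun k _ => ?_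
              rw [hcvdef]
              rw [Finset.smul_sum]
              exact Finset.sum_congr rfl fun j' _ => by rw [smul_smul, mul_comm]
          _ = ∑ j', (∑ k, P j' k * P⁻¹ k j) • bLr j' := by
              rw [Finset.sum_comm]
              exact Finset.sum_congr rfl fun j' _ => (Finset.sum_smul).symm
          _ = bLr j := by
              have hPP : ∀ j', (∑ k, P j' k * P⁻¹ k j) = (P * P⁻¹) j' j :=
                fun j' => (Matrix.mul_apply).symm
              simp only [hPP, hPinv, Matrix.one_apply]
              simp [ite_smul]
      rw [← key]
      exact Submodule.sum_mem _ fun k _ =>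
        Submodule.smul_mem _ _ (Submodule.subset_span ⟨k, rfl⟩)
    obtain ⟨xco, hxco⟩ := (Submodule.mem_span_range_iff_exists_fun ℝ).mp (hsub hXmem)
    obtain ⟨yco, hyco⟩ := (Submodule.mem_span_range_iff_exists_fun ℝ).mp (hsub hYmem)
    obtain ⟨cco, hcco⟩ := (Submodule.mem_span_range_iff_exists_fun ℝ).mp (hsub hαmem)
    -- β in coordinates
    have hQ : ∀ a b : Fin (n+2) → ℝ,
        (∑ k, a k • cv k) ⬝ᵥ Br *ᵥ (∑ l, b l • cv l)
          = ∑ k : Fin (n+2), (if (k : ℕ) < 2 then (1:ℝ) else -1) * (a k * b k) := by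
      intro a b
      rw [aux_expand]
      calc ∑ k, ∑ l, a k * b l * (cv k ⬝ᵥ Br *ᵥ cv l)
          = ∑ k, ∑ l, a k * b l *
              (if k = l then (if (k : ℕ) < 2 then (1:ℝ) else -1) else 0) := by
            exact Finset.sum_congr rfl fun k _ => Finset.sum_congr rfl fun l _ => by
              rw [hGram]
        _ = ∑ k : Fin (n+2), (if (k : ℕ) < 2 then (1:ℝ) else -1) * (a k * b k) :=
            aux_collapse _ a b
    -- cast of the rational value
    have hcastα : ((α ⬝ᵥ (B.map (Int.cast : ℤ → ℚ)) *ᵥ α : ℚ) : ℝ) = αr ⬝ᵥ Br *ᵥ αr := by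
      have hmap2 : (B.map (Int.cast : ℤ → ℚ)).map ⇑(Rat.castHom ℝ) = Br := by
        ext i j; simp [hBrdef, Matrix.map_apply]
      have := aux_cast (Rat.castHom ℝ) (B.map (Int.cast : ℤ → ℚ)) α α
      rw [hmap2] at this
      simpa [Function.comp_def] using this
    -- apply the core lemma
    have hcore := core_pos n xco yco cco
      (fun a b => ∑ k : Fin (n+2), (if (k : ℕ) < 2 then (1:ℝ) else -1) * (a k * b k))
      (fun a b => rfl) ?_ ?_ ?_ ?_ ?_ ?_
    · -- derive contradiction from cco = 0
      have : αr = 0 := by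
        rw [← hcco, hcore]
        simp
      obtain ⟨i, hi⟩ := Function.ne_iff.mp hα
      apply hi
      have h2 : ((α i : ℚ) : ℝ) = 0 := by
        have h3 := congrFun this i
        simpa [hαrdef] using h3
      have h4 : α i = 0 := by exact_mod_cast h2
      simpa using h4
    · beta_reduce; rw [← hQ xco xco, hxco]; exact hXX
    · beta_reduce; rw [← hQ yco yco, hyco, ← hQ xco xco, hxco]; exact e1'.symm
    · beta_reduce; rw [← hQ xco yco, hxco, hyco]; exact hxy
    · beta_reduce; rw [← hQ xco cco, hxco, hcco]; exact hxc
    · beta_reduce; rw [← hQ yco cco, hyco, hcco]; exact hyc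
    · beta_reduce
      rw [← hQ cco cco, hcco, ← hcastα]
      exact_mod_cast hαnn
  · -- Part 3
    intro h0
    ext Z
    simp only [Set.mem_setOf_eq]
    constructor
    · rintro ⟨h1, _⟩
      exact h1
    · intro h1
      refine ⟨h1, ?_⟩
      rw [hequiv Z h1.1, h0]
      rw [show (fun i => (((0 : ι → ℚ) i : ℚ) : ℂ)) = 0 from funext fun i => by simp]
      rw [Matrix.mulVec_zero, dotProduct_zero]
  · -- Part 4
    constructor
    · intro h0 l hl
      have h := hαproj l hl
      rw [h0] at h
      simp only [zero_dotProduct] at h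
      exact_mod_cast h.symm
    · intro hperp
      have hαq := castL_spanQ bL L hbLspan α hαspan
      obtain ⟨a, ha⟩ := (Submodule.mem_span_range_iff_exists_fun ℚ).mp hαq
      set G : Matrix (Fin (n+2)) (Fin (n+2)) ℤ := Matrix.of (fun i j => bL i ⬝ᵥ B *ᵥ bL j)
        with hG
      obtain ⟨P, hPdet, hPG⟩ := hsigL
      have hGr : (Matrix.of fun i j => ((bL i ⬝ᵥ B.mulVec (bL j) : ℤ) : ℝ))
          = G.map (Int.cast : ℤ → ℝ) := by
        ext i j; simp [hG, Matrix.map_apply]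
      rw [hGr] at hPG
      have hdetD : (Matrix.diagonal
          (fun i : Fin (n + 2) => if (i : ℕ) < 2 then (1 : ℝ) else -1)).det ≠ 0 := by
        rw [Matrix.det_diagonal]
        apply Finset.prod_ne_zero_iff.mpr
        intro i _
        split <;> norm_num
      have hdetGr : (G.map (Int.cast : ℤ → ℝ)).det ≠ 0 := by
        intro hz
        apply hdetD
        rw [← hPG, Matrix.det_mul, Matrix.det_mul, hz]
        ring
      have hdetG : G.det ≠ 0 := by
        intro hz
        apply hdetGr
        have h2 : (G.map (Int.cast : ℤ → ℝ)).det = ((G.det : ℤ) : ℝ) := by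
          rw [show (G.map (Int.cast : ℤ → ℝ)) = (Int.castRingHom ℝ).mapMatrix G from by
            ext i j; simp, ← RingHom.map_det]
          simp
        rw [h2, hz]
        simp
      have hdetGq : (G.map (Int.cast : ℤ → ℚ)).det ≠ 0 := by
        have h2 : (G.map (Int.cast : ℤ → ℚ)).det = ((G.det : ℤ) : ℚ) := by
          rw [show (G.map (Int.cast : ℤ → ℚ)) = (Int.castRingHom ℚ).mapMatrix G from by
            ext i j; simp, ← RingHom.map_det]
          simp
        rw [h2]
        exact_mod_cast hdetG
      have hrow : ∀ j, ∑ k, a k * ((G k j : ℤ) : ℚ) = 0 := by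
        intro j
        have h1 : α ⬝ᵥ (B.map (Int.cast : ℤ → ℚ)) *ᵥ (fun i => ((bL j i : ℤ) : ℚ)) = 0 := by
          rw [hαproj (bL j) (hbLmem j), hperp (bL j) (hbLmem j)]
          simp
        rw [← ha, aux_expand1] at h1
        calc ∑ k, a k * ((G k j : ℤ) : ℚ)
            = ∑ k, a k * ((fun jj => fun i => ((bL jj i : ℤ) : ℚ)) k ⬝ᵥ
                (B.map (Int.cast : ℤ → ℚ)) *ᵥ (fun i => ((bL j i : ℤ) : ℚ))) := by
              refine Finset.sum_congr rfl (fun k _ => ?_)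
              have h : ((bL k ⬝ᵥ B *ᵥ bL j : ℤ) : ℚ)
                  = (fun i => ((bL k i : ℤ) : ℚ)) ⬝ᵥ (B.map (Int.cast : ℤ → ℚ)) *ᵥ
                    (fun i => ((bL j i : ℤ) : ℚ)) := by
                simpa [Function.comp_def] using aux_cast (Int.castRingHom ℚ) B (bL k) (bL j)
              simp only [hG, Matrix.of_apply, h]
          _ = 0 := h1
      have havec : Matrix.vecMul a (G.map (Int.cast : ℤ → ℚ)) = 0 := by
        funext j
        have := hrow j
        simpa [Matrix.vecMul, dotProduct, Matrix.map_apply] using this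
      have ha0 : a = 0 := by
        by_contra hne
        exact hdetGq (Matrix.exists_vecMul_eq_zero_iff.mp ⟨a, hne, havec⟩)
      rw [← ha, ha0]
      simp
end
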